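/- Let ε > 0, let G be a finite abelian group of size N, let f : G → ℝ be a function and A ⊆ G with |A| = αN. Suppose B ⊆ G is a symmetric set containing 0 such that for every t ∈ B, ||f * 1_A(· + t) − f * 1_A||_∞ ≤ ε. Assume further ||f||_1 ≤ 1/(2α) and (f * 1_A)(0) ≥ 1 − ε. Then there exists x ∈ G such that |B ∩ (x + A)| ≥ 2α(1 − 2ε)|B|. -/

import Mathlib

open scoped Classical BigOperators Pointwise

variable {G : Type*} [AddCommGroup G] [Fintype G]

/-- The Bohr set `Bohr(Γ, ρ) = {x : |1 - γ(x)| ≤ ρ for all γ ∈ Γ}`. -/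
noncomputable def bohr (Γ : Finset (AddChar G ℂ)) (ρ : ℝ) : Finset G :=
  Finset.univ.filter fun x => ∀ γ ∈ Γ, ‖(1 - γ x)‖ ≤ ρ

/-- Regularity of the Bohr set `Bohr(Γ, ρ)` (dimension `d = Γ.card`). -/
noncomputable def BohrRegular (Γ : Finset (AddChar G ℂ)) (ρ : ℝ) : Prop :=
  ∀ δ : ℝ, |δ| ≤ 1 / (12 * Γ.card) →
    (1 - 12 * Γ.card * |δ|) * (bohr Γ ρ).card ≤ ((bohr Γ (ρ * (1 + δ))).card : ℝ) ∧
    ((bohr Γ (ρ * (1 + δ))).card : ℝ) ≤ (1 + 12 * Γ.card * |δ|) * (bohr Γ ρ).card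

/-- Indicator function of a finite set. -/
noncomputable def ind (A : Finset G) : G → ℝ := fun x => if x ∈ A then 1 else 0

/-- Normalized indicator `μ_A = 1_A / |A|`. -/
noncomputable def mu (A : Finset G) : G → ℝ := fun x => (if x ∈ A then 1 else 0) / A.card

/-- Convolution `(f * g)(x) = ∑ t, f t * g (x - t)`. -/
noncomputable def conv (f g : G → ℝ) : G → ℝ := fun x => ∑ t, f t * g (x - t)

/-- `L¹` norm. -/
noncomputable def l1 (f : G → ℝ) : ℝ := ∑ x, |f x|

/-!
Every almost-period `t ∈ B` satisfies `(f * 1_A)(t) ≥ (f * 1_A)(0) - ε ≥ 1 - 2ε`, so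
`(1 - 2ε)|B| ≤ ∑_{t ∈ B} (f * 1_A)(t) = ∑_y f(y) |B ∩ (y + A)|`. Bounding the right-hand side by
`‖f‖₁ · max_y |B ∩ (y + A)| ≤ max_y |B ∩ (y + A)| / (2α)` gives the translate.
-/

lemma mul_card_le_sum_of_abs_sub_le {ι : Type*} {F : ι → ℝ} {B : Finset ι} {x₀ : ι} {ε : ℝ}
    (hper : ∀ t ∈ B, |F t - F x₀| ≤ ε) (h0 : 1 - ε ≤ F x₀) :
    (1 - 2 * ε) * B.card ≤ ∑ t ∈ B, F t := by
  rw [mul_comm, ← nsmul_eq_mul, ← Finset.sum_const]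
  refine Finset.sum_le_sum fun t ht => ?_
  linarith [(abs_le.1 (hper t ht)).1]

lemma sum_conv_ind_eq (f : G → ℝ) (A B : Finset G) :
    ∑ t ∈ B, conv f (ind A) t = ∑ y, f y * (B.filter fun b => b - y ∈ A).card := by
  simp only [conv, ind]
  rw [Finset.sum_comm]
  refine Finset.sum_congr rfl fun y _ => ?_
  rw [← Finset.mul_sum, Finset.sum_boole]

lemma sum_mul_le_sum_abs_mul {ι : Type*} [Fintype ι] (f c : ι → ℝ) {M : ℝ}
    (hc0 : ∀ y, 0 ≤ c y) (hcM : ∀ y, c y ≤ M) :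
    ∑ y, f y * c y ≤ (∑ y, |f y|) * M := by
  rw [Finset.sum_mul]
  refine Finset.sum_le_sum fun y _ => ?_
  calc f y * c y ≤ |f y| * c y := mul_le_mul_of_nonneg_right (le_abs_self _) (hc0 y)
    _ ≤ |f y| * M := mul_le_mul_of_nonneg_left (hcM y) (abs_nonneg _)

theorem almost_periods_to_increment_general {G : Type*} [AddCommGroup G] [Fintype G]
    (ε α : ℝ) (hα : 0 < α) (f : G → ℝ) (A B : Finset G)
    (hper : ∀ t ∈ B, ∀ x, |conv f (ind A) (x + t) - conv f (ind A) x| ≤ ε)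
    (hf1 : l1 f ≤ 1 / (2 * α))
    (h0 : 1 - ε ≤ conv f (ind A) 0) :
    ∃ x : G, 2 * α * (1 - 2 * ε) * B.card ≤ ((B.filter (fun b => b - x ∈ A)).card : ℝ) := by
  set c : G → ℝ := fun y => ((B.filter fun b => b - y ∈ A).card : ℝ)
  obtain ⟨x₀, hx₀⟩ := Finite.exists_max c
  refine ⟨x₀, ?_⟩
  have hc0 : ∀ y, 0 ≤ c y := fun y => Nat.cast_nonneg _
  have key : (1 - 2 * ε) * B.card ≤ c x₀ / (2 * α) :=
    calc (1 - 2 * ε) * B.card ≤ ∑ t ∈ B, conv f (ind A) t :=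
          mul_card_le_sum_of_abs_sub_le (fun t ht => by simpa using hper t ht 0) h0
      _ = ∑ y, f y * c y := sum_conv_ind_eq f A B
      _ ≤ l1 f * c x₀ := sum_mul_le_sum_abs_mul f c hc0 hx₀
      _ ≤ 1 / (2 * α) * c x₀ := mul_le_mul_of_nonneg_right hf1 (hc0 x₀)
      _ = c x₀ / (2 * α) := one_div_mul_eq_div _ _
  rw [le_div_iff₀ (by positivity)] at key
  linarith

/-- almost-periods of `f * 1_A` over a symmetric set `B` yield a
translate of `A` with density `≥ 2α(1-2ε)` inside `B`. -/
theorem almost_periods_to_increment {G : Type*} [AddCommGroup G] [Fintype G]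
    (ε α : ℝ) (hε : 0 < ε) (hα : 0 < α) (f : G → ℝ) (A B : Finset G)
    (hAcard : (A.card : ℝ) = α * Fintype.card G)
    (hB0 : (0 : G) ∈ B) (hBsymm : ∀ x ∈ B, -x ∈ B)
    (hper : ∀ t ∈ B, ∀ x, |conv f (ind A) (x + t) - conv f (ind A) x| ≤ ε)
    (hf1 : l1 f ≤ 1 / (2 * α))
    (h0 : 1 - ε ≤ conv f (ind A) 0) :
    ∃ x : G, 2 * α * (1 - 2 * ε) * B.card ≤ ((B.filter (fun b => b - x ∈ A)).card : ℝ) :=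
  almost_periods_to_increment_general ε α hα f A B hper hf1 h0
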